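/- Define ‖M - N‖_ω := sup over states ξ on R⊗A extending ω^A of ‖(id_R⊗M)(ξ) - (id_R⊗N)(ξ)‖₁ for CPTP maps M, N : A → B. Then for CPTP maps M, N : A → B and K, L : A' → B' and states ω on A, ρ on A', we have ‖M⊗K - N⊗L‖_{ω⊗ρ} ≤ ‖M - N‖_ω + ‖K - L‖_ρ. -/

import Mathlib

open scoped Matrix Kronecker ComplexOrder

noncomputable section

/-- The old `Matrix.PosSemidef.sqrt` (removed from Mathlib), spelled out verbatim. -/
noncomputable def Matrix.PosSemidef.sqrt {n : Type*} [Fintype n] [DecidableEq n] {A : Matrix n n ℂ}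
    (hA : A.PosSemidef) : Matrix n n ℂ :=
  hA.1.eigenvectorUnitary.1 * Matrix.diagonal ((↑) ∘ (√·) ∘ hA.1.eigenvalues) *
  (star hA.1.eigenvectorUnitary : Matrix n n ℂ)

noncomputable def traceNorm {n : Type*} [Fintype n] [DecidableEq n] (A : Matrix n n ℂ) : ℝ :=
  ((Matrix.posSemidef_conjTranspose_mul_self A).sqrt.trace).re

noncomputable def vnEntropy {n : Type*} [Fintype n] [DecidableEq n] (ρ : Matrix n n ℂ) : ℝ :=
  if h : ρ.IsHermitian then -∑ i, (h.eigenvalues i * Real.log (h.eigenvalues i)) else 0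

def ptraceL {a b : Type*} [Fintype a] (M : Matrix (a × b) (a × b) ℂ) : Matrix b b ℂ :=
  Matrix.of fun i j => ∑ k : a, M (k, i) (k, j)

def ptraceR {a b : Type*} [Fintype b] (M : Matrix (a × b) (a × b) ℂ) : Matrix a a ℂ :=
  Matrix.of fun i j => ∑ k : b, M (i, k) (j, k)

def ptrace3M {a b c : Type*} [Fintype b] (M : Matrix (a × b × c) (a × b × c) ℂ) :
    Matrix (a × c) (a × c) ℂ :=
  Matrix.of fun i j => ∑ k : b, M (i.1, k, i.2) (j.1, k, j.2)

open scoped Classical in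
noncomputable def msqrt {n : Type*} [Fintype n] [DecidableEq n] (A : Matrix n n ℂ) :
    Matrix n n ℂ :=
  if h : A.PosSemidef then h.sqrt else 0

noncomputable def fidelity {n : Type*} [Fintype n] [DecidableEq n] (ρ σ : Matrix n n ℂ) : ℝ :=
  (((msqrt (msqrt σ * ρ * msqrt σ)).trace).re) ^ 2

def outer {n : Type*} (v : n → ℂ) : Matrix n n ℂ :=
  Matrix.of fun i j => v i * (starRingEnd ℂ) (v j)

def krausApply {ι a b : Type*} [Fintype ι] [Fintype a]
    (K : ι → Matrix b a ℂ) (ρ : Matrix a a ℂ) : Matrix b b ℂ :=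
  ∑ i, K i * ρ * (K i)ᴴ

noncomputable def cdist {i k a b : Type*} [Fintype i] [Fintype k] [Fintype a] [DecidableEq a]
    [Fintype b] [DecidableEq b]
    (K : i -> Matrix b a Complex) (L : k -> Matrix b a Complex) (w : Matrix a a Complex) : Real :=
  sSup {r | exists (m : Nat) (x : Matrix (Fin m × a) (Fin m × a) Complex),
    x.PosSemidef ∧ x.trace = 1 ∧ ptraceL x = w ∧
    r = traceNorm (krausApply (fun j => (1 : Matrix (Fin m) (Fin m) Complex) ⊗ₖ K j) x
          - krausApply (fun j => (1 : Matrix (Fin m) (Fin m) Complex) ⊗ₖ L j) x)}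


/-!
Fix a test state `x` on `R ⊗ A ⊗ A'` with marginal `ω ⊗ ρ`. Since `M ⊗ K = (id ⊗ K) ∘ (M ⊗ id)`,
inserting the intermediate output `(id ⊗ K)(Q)`, `Q = (N ⊗ id)(x)`, into the triangle inequality
leaves two terms. The first is `(id ⊗ K)` applied to `(M ⊗ id)(x) - (N ⊗ id)(x)`; channels
contract the trace norm, so it is at most `‖M - N‖_ω`, read with the reference `R ⊗ A'`. The
second compares `id ⊗ K` and `id ⊗ L` on `Q`, whose marginal on `A'` is still `ρ` because `N` is
trace preserving; so it is at most `‖K - L‖_ρ`, read with the reference `R ⊗ B`.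

The trace-norm facts all come from the Jordan decomposition `X = X⁺ - X⁻`: one has
`‖X‖₁ = tr X⁺ + tr X⁻ ≤ tr P + tr Q` for every splitting `X = P - Q` into positive parts, which
gives the triangle inequality and the contractivity of positive trace-preserving maps.
-/

open scoped MatrixOrder

theorem Matrix.trace_submatrix_equiv {m n : Type*} [Fintype m] [Fintype n] (e : m ≃ n)
    (X : Matrix n n ℂ) : (X.submatrix e e).trace = X.trace :=
  e.sum_comp X.diag

section TraceNorm

variable {n m : Type*} [Fintype n] [DecidableEq n] [Fintype m] [DecidableEq m]

theorem Matrix.PosSemidef.sqrt_eq_cfcSqrt {A : Matrix n n ℂ} (hA : A.PosSemidef) :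
    hA.sqrt = CFC.sqrt A := by
  rw [CFC.sqrt_eq_real_sqrt A hA.nonneg, cfcₙ_eq_cfc, hA.1.cfc_eq]
  simp only [Matrix.IsHermitian.cfc, Unitary.conjStarAlgAut_apply, Matrix.PosSemidef.sqrt]
  rfl

theorem traceNorm_eq_re_trace_abs (X : Matrix n n ℂ) : traceNorm X = (CFC.abs X).trace.re := by
  rw [traceNorm, Matrix.PosSemidef.sqrt_eq_cfcSqrt]
  rfl

theorem traceNorm_nonneg (X : Matrix n n ℂ) : 0 ≤ traceNorm X := by
  rw [traceNorm_eq_re_trace_abs]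
  exact (Complex.nonneg_iff.mp (Matrix.nonneg_iff_posSemidef.mp (CFC.abs_nonneg X)).trace_nonneg).1

theorem Matrix.posSemidef_posPart (X : Matrix n n ℂ) : (X⁺).PosSemidef :=
  Matrix.nonneg_iff_posSemidef.mp (CFC.posPart_nonneg X)

theorem Matrix.posSemidef_negPart (X : Matrix n n ℂ) : (X⁻).PosSemidef :=
  Matrix.nonneg_iff_posSemidef.mp (CFC.negPart_nonneg X)

theorem Matrix.IsHermitian.traceNorm_eq {X : Matrix n n ℂ} (hX : X.IsHermitian) :
    traceNorm X = (X⁺.trace + X⁻.trace).re := by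
  rw [traceNorm_eq_re_trace_abs, ← CFC.posPart_add_negPart X hX.isSelfAdjoint, Matrix.trace_add]

theorem Matrix.PosSemidef.trace_mul_nonneg {A B : Matrix n n ℂ} (hA : A.PosSemidef)
    (hB : B.PosSemidef) : 0 ≤ (A * B).trace := by
  have hsqrt : CFC.sqrt A * CFC.sqrt A = A := CFC.sqrt_mul_sqrt_self A hA.nonneg
  have hherm : (CFC.sqrt A)ᴴ = CFC.sqrt A :=
    (Matrix.nonneg_iff_posSemidef.mp (CFC.sqrt_nonneg A)).1
  rw [← hsqrt, Matrix.mul_assoc, Matrix.trace_mul_comm, Matrix.mul_assoc]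
  have := (hB.conjTranspose_mul_mul_same (CFC.sqrt A)).trace_nonneg
  rwa [hherm, Matrix.mul_assoc] at this

theorem Matrix.IsHermitian.exists_sign {X : Matrix n n ℂ} (hX : X.IsHermitian) :
    ∃ S : Matrix n n ℂ, (1 - S).PosSemidef ∧ (1 + S).PosSemidef ∧ S * X = CFC.abs X := by
  set sgn : ℝ → ℝ := fun x => if 0 ≤ x then 1 else -1
  have hcont : ContinuousOn sgn (spectrum ℝ X) := X.finite_real_spectrum.continuousOn sgn
  refine ⟨cfc sgn X, ?_, ?_, ?_⟩
  · rw [← Matrix.nonneg_iff_posSemidef, ← cfc_one ℝ X, ← cfc_sub _ _ X]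
    exact cfc_nonneg fun x _ => by by_cases h : 0 ≤ x <;> simp [sgn, h]
  · rw [← Matrix.nonneg_iff_posSemidef, ← cfc_one ℝ X, ← cfc_add (a := X) 1 sgn]
    exact cfc_nonneg fun x _ => by by_cases h : 0 ≤ x <;> simp [sgn, h]
  · calc cfc sgn X * X = cfc sgn X * cfc id X := by rw [cfc_id ℝ X]
      _ = CFC.abs X := by
        rw [← cfc_mul _ _ X, CFC.abs_eq_cfc_norm X hX.isSelfAdjoint]
        refine cfc_congr fun x _ => ?_
        by_cases h : 0 ≤ x <;> simp [sgn, h, abs_of_nonneg, abs_of_neg, not_le.mp]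

theorem traceNorm_sub_le_re_trace_add {P Q : Matrix n n ℂ} (hP : P.PosSemidef)
    (hQ : Q.PosSemidef) : traceNorm (P - Q) ≤ (P.trace + Q.trace).re := by
  -- `‖P - Q‖₁ = tr (S P) - tr (S Q)` for the sign `S` of `P - Q`, and `0 ≤ tr ((1 ∓ S) T)`
  -- for `0 ≤ T`.
  obtain ⟨S, hS₁, hS₂, hS⟩ := (hP.1.sub hQ.1).exists_sign
  have hSP := (Complex.nonneg_iff.mp (hS₁.trace_mul_nonneg hP)).1
  have hSQ := (Complex.nonneg_iff.mp (hS₂.trace_mul_nonneg hQ)).1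
  rw [Matrix.sub_mul, Matrix.one_mul, Matrix.trace_sub, Complex.sub_re] at hSP
  rw [Matrix.add_mul, Matrix.one_mul, Matrix.trace_add, Complex.add_re] at hSQ
  rw [traceNorm_eq_re_trace_abs, ← hS, Matrix.mul_sub, Matrix.trace_sub, Complex.sub_re,
    Complex.add_re]
  linarith

theorem traceNorm_add_le {X Y : Matrix n n ℂ} (hX : X.IsHermitian) (hY : Y.IsHermitian) :
    traceNorm (X + Y) ≤ traceNorm X + traceNorm Y :=
  calc traceNorm (X + Y) = traceNorm ((X⁺ + Y⁺) - (X⁻ + Y⁻)) := by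
        rw [add_sub_add_comm, CFC.posPart_sub_negPart X hX.isSelfAdjoint,
          CFC.posPart_sub_negPart Y hY.isSelfAdjoint]
    _ ≤ ((X⁺ + Y⁺).trace + (X⁻ + Y⁻).trace).re :=
        traceNorm_sub_le_re_trace_add ((X.posSemidef_posPart).add Y.posSemidef_posPart)
          ((X.posSemidef_negPart).add Y.posSemidef_negPart)
    _ = traceNorm X + traceNorm Y := by
        rw [hX.traceNorm_eq, hY.traceNorm_eq, Matrix.trace_add, Matrix.trace_add]
        simp only [Complex.add_re]
        ring

theorem traceNorm_map_le (f : Matrix n n ℂ →+ Matrix m m ℂ)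
    (hf : ∀ P, P.PosSemidef → (f P).PosSemidef) (htr : ∀ P, (f P).trace = P.trace)
    {X : Matrix n n ℂ} (hX : X.IsHermitian) : traceNorm (f X) ≤ traceNorm X :=
  calc traceNorm (f X) = traceNorm (f X⁺ - f X⁻) := by
        rw [← map_sub, CFC.posPart_sub_negPart X hX.isSelfAdjoint]
    _ ≤ ((f X⁺).trace + (f X⁻).trace).re :=
        traceNorm_sub_le_re_trace_add (hf _ X.posSemidef_posPart) (hf _ X.posSemidef_negPart)
    _ = traceNorm X := by rw [htr, htr, hX.traceNorm_eq]

theorem traceNorm_submatrix_le (e : m ≃ n) {X : Matrix n n ℂ} (hX : X.IsHermitian) :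
    traceNorm (X.submatrix e e) ≤ traceNorm X :=
  traceNorm_map_le (Matrix.reindexAddEquiv ℂ e.symm e.symm).toAddMonoidHom
    (fun _ hP => hP.submatrix e) (Matrix.trace_submatrix_equiv e) hX

theorem traceNorm_submatrix (e : m ≃ n) {X : Matrix n n ℂ} (hX : X.IsHermitian) :
    traceNorm (X.submatrix e e) = traceNorm X := by
  refine le_antisymm (traceNorm_submatrix_le e hX) ?_
  simpa using traceNorm_submatrix_le e.symm (hX.submatrix e)

end TraceNorm

theorem Matrix.kronecker_sum {ι l m n p : Type*} [Fintype ι] (A : Matrix l m ℂ)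
    (B : ι → Matrix n p ℂ) : A ⊗ₖ (∑ i, B i) = ∑ i, A ⊗ₖ B i := by
  ext
  simp [Matrix.kroneckerMap_apply, Matrix.sum_apply, Finset.mul_sum]

theorem Matrix.sum_kronecker {ι l m n p : Type*} [Fintype ι] (A : ι → Matrix l m ℂ)
    (B : Matrix n p ℂ) : (∑ i, A i) ⊗ₖ B = ∑ i, A i ⊗ₖ B := by
  ext
  simp [Matrix.kroneckerMap_apply, Matrix.sum_apply, Finset.sum_mul]

section Kraus

variable {ι κ a b c : Type*} [Fintype ι] [Fintype κ] [Fintype a]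

theorem krausApply_add (K : ι → Matrix b a ℂ) (x y : Matrix a a ℂ) :
    krausApply K (x + y) = krausApply K x + krausApply K y := by
  simp only [krausApply, Matrix.mul_add, Matrix.add_mul, Finset.sum_add_distrib]

theorem krausApply_sub (K : ι → Matrix b a ℂ) (x y : Matrix a a ℂ) :
    krausApply K (x - y) = krausApply K x - krausApply K y := by
  simp only [krausApply, Matrix.mul_sub, Matrix.sub_mul, Finset.sum_sub_distrib]

theorem Matrix.PosSemidef.krausApply [Fintype b] (K : ι → Matrix b a ℂ) {x : Matrix a a ℂ}
    (hx : x.PosSemidef) : (krausApply K x).PosSemidef :=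
  Matrix.posSemidef_sum _ fun i _ => hx.mul_mul_conjTranspose_same (K i)

theorem trace_krausApply_mul [Fintype b] (K : ι → Matrix b a ℂ) (x : Matrix a a ℂ)
    (Y : Matrix b b ℂ) : (krausApply K x * Y).trace = (x * ∑ i, (K i)ᴴ * Y * K i).trace := by
  simp only [krausApply, Finset.sum_mul, Matrix.mul_sum, Matrix.trace_sum]
  refine Finset.sum_congr rfl fun i _ => ?_
  rw [Matrix.mul_assoc, Matrix.mul_assoc, Matrix.trace_mul_comm]
  simp only [Matrix.mul_assoc]

theorem krausApply_submatrix [Fintype b] {a' b' : Type*} [Fintype a'] (K : ι → Matrix b a ℂ)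
    (x : Matrix a a ℂ) (eb : b' ≃ b) (ea : a' ≃ a) :
    (krausApply K x).submatrix eb eb
      = krausApply (fun i => (K i).submatrix eb ea) (x.submatrix ea ea) := by
  ext p q
  simp only [krausApply, Matrix.submatrix_apply, Matrix.sum_apply]
  refine Finset.sum_congr rfl fun i _ => ?_
  rw [Matrix.conjTranspose_submatrix, Matrix.submatrix_mul_equiv, Matrix.submatrix_mul_equiv,
    Matrix.submatrix_apply]

theorem krausApply_krausApply [Fintype b] (C : κ → Matrix c b ℂ) (D : ι → Matrix b a ℂ)
    (x : Matrix a a ℂ) :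
    krausApply C (krausApply D x) = krausApply (fun p : ι × κ => C p.2 * D p.1) x := by
  simp only [krausApply, Matrix.mul_sum, Matrix.sum_mul, Fintype.sum_prod_type]
  rw [Finset.sum_comm]
  simp only [Matrix.conjTranspose_mul, Matrix.mul_assoc]

theorem krausApply_one_kronecker_kronecker {R a' b b' : Type*} [Fintype R] [DecidableEq R]
    [Fintype b] [DecidableEq b] [Fintype a'] [DecidableEq a'] (M : ι → Matrix b a ℂ)
    (K : κ → Matrix b' a' ℂ) (x : Matrix (R × a × a') (R × a × a') ℂ) :
    krausApply (fun p : ι × κ => (1 : Matrix R R ℂ) ⊗ₖ (M p.1 ⊗ₖ K p.2)) x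
      = krausApply (fun j => (1 : Matrix R R ℂ) ⊗ₖ ((1 : Matrix b b ℂ) ⊗ₖ K j))
          (krausApply (fun i => (1 : Matrix R R ℂ) ⊗ₖ (M i ⊗ₖ (1 : Matrix a' a' ℂ))) x) := by
  rw [krausApply_krausApply]
  simp only [← Matrix.mul_kronecker_mul, Matrix.one_mul, Matrix.mul_one]

end Kraus

def IsTracePreserving {ι a b : Type*} [Fintype ι] [Fintype a] [DecidableEq a] [Fintype b]
    (K : ι → Matrix b a ℂ) : Prop :=
  ∑ i, (K i)ᴴ * K i = 1

namespace IsTracePreserving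

variable {ι κ a b : Type*} [Fintype ι] [Fintype κ] [Fintype a] [DecidableEq a] [Fintype b]
  {K : ι → Matrix b a ℂ}

theorem trace_krausApply (hK : IsTracePreserving K) (x : Matrix a a ℂ) :
    (krausApply K x).trace = x.trace := by
  classical
  rw [← Matrix.mul_one (krausApply K x), trace_krausApply_mul]
  simp only [Matrix.mul_one]
  rw [hK, Matrix.mul_one]

theorem one_kronecker (R : Type*) [Fintype R] [DecidableEq R] (hK : IsTracePreserving K) :
    IsTracePreserving (fun i => (1 : Matrix R R ℂ) ⊗ₖ K i) := by
  simp only [IsTracePreserving, Matrix.conjTranspose_kronecker, Matrix.conjTranspose_one,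
    ← Matrix.mul_kronecker_mul, Matrix.one_mul, ← Matrix.kronecker_sum]
  rw [hK, Matrix.one_kronecker_one]

theorem kronecker_one (R : Type*) [Fintype R] [DecidableEq R] (hK : IsTracePreserving K) :
    IsTracePreserving (fun i => K i ⊗ₖ (1 : Matrix R R ℂ)) := by
  simp only [IsTracePreserving, Matrix.conjTranspose_kronecker, Matrix.conjTranspose_one,
    ← Matrix.mul_kronecker_mul, Matrix.one_mul, ← Matrix.sum_kronecker]
  rw [hK, Matrix.one_kronecker_one]

variable [DecidableEq b]

theorem traceNorm_krausApply_le (hK : IsTracePreserving K) {X : Matrix a a ℂ}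
    (hX : X.IsHermitian) : traceNorm (krausApply K X) ≤ traceNorm X :=
  traceNorm_map_le (AddMonoidHom.mk' (krausApply K) (krausApply_add K))
    (fun _ hP => hP.krausApply K) hK.trace_krausApply hX

theorem traceNorm_krausApply_sub_le {L : κ → Matrix b a ℂ} (hK : IsTracePreserving K)
    {P Q : Matrix a a ℂ} (hP : P.PosSemidef) (hQ : Q.PosSemidef) :
    traceNorm (krausApply K P - krausApply L Q)
      ≤ traceNorm (P - Q) + traceNorm (krausApply K Q - krausApply L Q) :=
  calc traceNorm (krausApply K P - krausApply L Q)
      ≤ traceNorm (krausApply K P - krausApply K Q)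
          + traceNorm (krausApply K Q - krausApply L Q) := by
        rw [← sub_add_sub_cancel _ (krausApply K Q)]
        exact traceNorm_add_le ((hP.krausApply K).1.sub (hQ.krausApply K).1)
          ((hQ.krausApply K).1.sub (hQ.krausApply L).1)
    _ ≤ traceNorm (P - Q) + traceNorm (krausApply K Q - krausApply L Q) := by
        rw [← krausApply_sub]
        gcongr
        exact hK.traceNorm_krausApply_le (hP.1.sub hQ.1)

theorem traceNorm_krausApply_sub_le_two {L : κ → Matrix b a ℂ} (hK : IsTracePreserving K)
    (hL : IsTracePreserving L) {x : Matrix a a ℂ} (hx : x.PosSemidef) (hx1 : x.trace = 1) :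
    traceNorm (krausApply K x - krausApply L x) ≤ 2 := by
  have h := traceNorm_sub_le_re_trace_add (hx.krausApply K) (hx.krausApply L)
  rwa [hK.trace_krausApply, hL.trace_krausApply, hx1, one_add_one_eq_two, Complex.re_ofNat] at h

end IsTracePreserving

section PartialTrace

variable {R n c d : Type*} [Fintype R]

theorem trace_ptraceL_mul [DecidableEq R] [Fintype n] (z : Matrix (R × n) (R × n) ℂ)
    (Y : Matrix n n ℂ) : (ptraceL z * Y).trace = (z * ((1 : Matrix R R ℂ) ⊗ₖ Y)).trace := by
  simp only [Matrix.trace, ptraceL, Matrix.diag_apply, Matrix.mul_apply, Matrix.of_apply,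
    Finset.sum_mul, Matrix.kroneckerMap_apply, Matrix.one_apply, ite_mul, one_mul, zero_mul,
    mul_ite, mul_zero, Fintype.sum_prod_type, Finset.sum_ite_irrel, Finset.sum_const_zero,
    Finset.sum_ite_eq', Finset.mem_univ, ↓reduceIte]
  conv_rhs => rw [Finset.sum_comm]
  exact Finset.sum_congr rfl fun _ _ => Finset.sum_comm

theorem ptraceL_kronecker (A : Matrix R R ℂ) (B : Matrix n n ℂ) :
    ptraceL (A ⊗ₖ B) = A.trace • B := by
  ext i j
  simp [ptraceL, Matrix.kroneckerMap_apply, Matrix.trace, Finset.sum_mul]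

theorem ptraceR_kronecker (A : Matrix n n ℂ) (B : Matrix R R ℂ) :
    ptraceR (A ⊗ₖ B) = B.trace • A := by
  ext i j
  simp [ptraceR, Matrix.kroneckerMap_apply, Matrix.trace, Finset.mul_sum, mul_comm]

theorem ptraceL_krausApply_one_kronecker [DecidableEq R] {ι : Type*} [Fintype ι] [Fintype c]
    [Fintype d] (D : ι → Matrix d c ℂ) (z : Matrix (R × c) (R × c) ℂ) :
    ptraceL (krausApply (fun i => (1 : Matrix R R ℂ) ⊗ₖ D i) z) = krausApply D (ptraceL z) := by
  refine Matrix.ext_iff_trace_mul_right.mpr fun Y => ?_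
  rw [trace_ptraceL_mul, trace_krausApply_mul, trace_krausApply_mul, trace_ptraceL_mul,
    Matrix.kronecker_sum]
  simp only [Matrix.conjTranspose_kronecker, Matrix.conjTranspose_one, ← Matrix.mul_kronecker_mul,
    Matrix.mul_one]

theorem IsTracePreserving.ptraceL_krausApply_kronecker_one {ι : Type*} [Fintype ι] [Fintype n]
    [DecidableEq n] [Fintype c] [DecidableEq c] [Fintype d] [DecidableEq d]
    {D : ι → Matrix d c ℂ} (hD : IsTracePreserving D) (z : Matrix (c × n) (c × n) ℂ) :
    ptraceL (krausApply (fun i => D i ⊗ₖ (1 : Matrix n n ℂ)) z) = ptraceL z := by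
  refine Matrix.ext_iff_trace_mul_right.mpr fun Y => ?_
  rw [trace_ptraceL_mul, trace_krausApply_mul, trace_ptraceL_mul]
  simp only [Matrix.conjTranspose_kronecker, Matrix.conjTranspose_one, ← Matrix.mul_kronecker_mul,
    Matrix.mul_one, Matrix.one_mul, ← Matrix.sum_kronecker]
  rw [hD]

end PartialTrace

def Equiv.prodAssocComm (R g c : Type*) : (R × g) × c ≃ R × (c × g) :=
  (Equiv.prodAssoc R g c).trans ((Equiv.refl R).prodCongr (Equiv.prodComm g c))

section Reindex

variable {R R' n c d g : Type*}

theorem ptraceL_submatrix_prodCongr [Fintype R] [Fintype R'] (e : R' ≃ R)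
    (z : Matrix (R × n) (R × n) ℂ) :
    ptraceL (z.submatrix (e.prodCongr (.refl n)) (e.prodCongr (.refl n))) = ptraceL z := by
  ext i j
  exact e.sum_comp fun k => z (k, i) (k, j)

theorem ptraceL_submatrix_prodAssoc [Fintype R] [Fintype c]
    (z : Matrix (R × c × g) (R × c × g) ℂ) :
    ptraceL (z.submatrix (Equiv.prodAssoc R c g) (Equiv.prodAssoc R c g))
      = ptraceL (ptraceL z) := by
  ext i j
  simp only [ptraceL, Matrix.submatrix_apply, Equiv.prodAssoc_apply, Fintype.sum_prod_type,
    Matrix.of_apply]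
  exact Finset.sum_comm

theorem ptraceL_submatrix_prodAssocComm [Fintype R] [Fintype g]
    (z : Matrix (R × c × g) (R × c × g) ℂ) :
    ptraceL (z.submatrix (Equiv.prodAssocComm R g c) (Equiv.prodAssocComm R g c))
      = ptraceR (ptraceL z) := by
  ext i j
  simp only [ptraceL, ptraceR, Equiv.prodAssocComm, Equiv.coe_trans, Equiv.prodCongr_apply,
    Equiv.coe_refl, Equiv.coe_prodComm, Matrix.submatrix_apply, Function.comp_apply,
    Equiv.prodAssoc_apply, Prod.map_apply, id_eq, Prod.swap_prod_mk, Fintype.sum_prod_type,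
    Matrix.of_apply]
  exact Finset.sum_comm

theorem one_kronecker_submatrix_prodCongr [DecidableEq R] [DecidableEq R'] (e : R' ≃ R)
    (W : Matrix c d ℂ) :
    ((1 : Matrix R R ℂ) ⊗ₖ W).submatrix (e.prodCongr (.refl c)) (e.prodCongr (.refl d))
      = (1 : Matrix R' R' ℂ) ⊗ₖ W := by
  ext ⟨p, i⟩ ⟨q, j⟩
  simp [Matrix.one_apply, e.injective.eq_iff]

theorem one_kronecker_one_kronecker_submatrix_prodAssoc [DecidableEq R] [DecidableEq c]
    (W : Matrix n d ℂ) :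
    ((1 : Matrix R R ℂ) ⊗ₖ ((1 : Matrix c c ℂ) ⊗ₖ W)).submatrix
        (Equiv.prodAssoc R c n) (Equiv.prodAssoc R c d)
      = (1 : Matrix (R × c) (R × c) ℂ) ⊗ₖ W := by
  rw [← Matrix.one_kronecker_one, ← Matrix.kronecker_assoc', Matrix.submatrix_submatrix]
  simp

theorem one_kronecker_kronecker_one_submatrix_prodAssocComm [DecidableEq R] [DecidableEq g]
    (W : Matrix c d ℂ) :
    ((1 : Matrix R R ℂ) ⊗ₖ (W ⊗ₖ (1 : Matrix g g ℂ))).submatrix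
        (Equiv.prodAssocComm R g c) (Equiv.prodAssocComm R g d)
      = (1 : Matrix (R × g) (R × g) ℂ) ⊗ₖ W := by
  ext ⟨⟨r, s⟩, i⟩ ⟨⟨r', s'⟩, i'⟩
  simp only [Matrix.submatrix_apply, Matrix.kroneckerMap_apply, Equiv.prodAssocComm,
    Equiv.trans_apply, Equiv.prodAssoc_apply, Equiv.prodCongr_apply, Equiv.coe_refl,
    Equiv.prodComm_apply, Prod.map_apply, id_eq, Prod.swap_prod_mk, Matrix.one_apply,
    Prod.mk.injEq]
  by_cases h1 : r = r' <;> by_cases h2 : s = s' <;> simp [h1, h2]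

end Reindex

section Cdist

variable {ι κ a b : Type*} [Fintype ι] [Fintype κ] [Fintype a] [DecidableEq a] [Fintype b]
  [DecidableEq b] {K : ι → Matrix b a ℂ} {L : κ → Matrix b a ℂ} {w : Matrix a a ℂ}

theorem cdist_nonneg (K : ι → Matrix b a ℂ) (L : κ → Matrix b a ℂ) (w : Matrix a a ℂ) :
    0 ≤ cdist K L w :=
  Real.sSup_nonneg fun _ ⟨_, _, _, _, _, hr⟩ => hr ▸ traceNorm_nonneg _

theorem le_cdist (hK : IsTracePreserving K) (hL : IsTracePreserving L) {m : ℕ}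
    {x : Matrix (Fin m × a) (Fin m × a) ℂ} (hx : x.PosSemidef) (hx1 : x.trace = 1)
    (hxw : ptraceL x = w) :
    traceNorm (krausApply (fun j => (1 : Matrix (Fin m) (Fin m) ℂ) ⊗ₖ K j) x
      - krausApply (fun j => (1 : Matrix (Fin m) (Fin m) ℂ) ⊗ₖ L j) x) ≤ cdist K L w := by
  refine le_csSup ⟨2, ?_⟩ ⟨m, x, hx, hx1, hxw, rfl⟩
  rintro _ ⟨m', x', hx', hx1', -, rfl⟩
  exact (hK.one_kronecker _).traceNorm_krausApply_sub_le_two (hL.one_kronecker _) hx' hx1'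

/-- The supremum in `cdist` only runs over references `Fin m`; any finite reference `R`, also
seen through a relabelling of `R × a` and `R × b`, obeys the same bound. -/
theorem traceNorm_krausApply_sub_le_cdist {R S T : Type*} [Fintype R] [DecidableEq R]
    [Fintype S] [DecidableEq S] [Fintype T] [DecidableEq T]
    (hK : IsTracePreserving K) (hL : IsTracePreserving L)
    {K' : ι → Matrix T S ℂ} {L' : κ → Matrix T S ℂ} (eS : R × a ≃ S) (eT : R × b ≃ T)
    (hK' : ∀ i, (K' i).submatrix eT eS = (1 : Matrix R R ℂ) ⊗ₖ K i)
    (hL' : ∀ i, (L' i).submatrix eT eS = (1 : Matrix R R ℂ) ⊗ₖ L i)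
    {x : Matrix S S ℂ} (hx : x.PosSemidef) (hx1 : x.trace = 1)
    (hxw : ptraceL (x.submatrix eS eS) = w) :
    traceNorm (krausApply K' x - krausApply L' x) ≤ cdist K L w := by
  set eR := (Fintype.equivFin R).symm
  set eS' := (eR.prodCongr (.refl a)).trans eS
  set eT' := (eR.prodCongr (.refl b)).trans eT
  have hsub : (krausApply K' x - krausApply L' x).submatrix eT' eT'
      = krausApply (fun j => (1 : Matrix (Fin _) (Fin _) ℂ) ⊗ₖ K j) (x.submatrix eS' eS')
        - krausApply (fun j => (1 : Matrix (Fin _) (Fin _) ℂ) ⊗ₖ L j) (x.submatrix eS' eS') := by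
    rw [Matrix.submatrix_sub, Pi.sub_apply, Pi.sub_apply, krausApply_submatrix K' x eT' eS',
      krausApply_submatrix L' x eT' eS']
    simp only [eS', eT', Equiv.coe_trans, ← Matrix.submatrix_submatrix, hK', hL',
      one_kronecker_submatrix_prodCongr]
  rw [← traceNorm_submatrix eT' ((hx.krausApply K').1.sub (hx.krausApply L').1), hsub]
  refine le_cdist hK hL (hx.submatrix _) ?_ ?_
  · rw [Matrix.trace_submatrix_equiv, hx1]
  · rw [Equiv.coe_trans, ← Matrix.submatrix_submatrix, ptraceL_submatrix_prodCongr, hxw]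

theorem traceNorm_sub_le_cdist_of_kronecker_one {R g : Type*} [Fintype R] [DecidableEq R]
    [Fintype g] [DecidableEq g] (hK : IsTracePreserving K) (hL : IsTracePreserving L)
    {x : Matrix (R × a × g) (R × a × g) ℂ} (hx : x.PosSemidef) (hx1 : x.trace = 1)
    (hxw : ptraceR (ptraceL x) = w) :
    traceNorm (krausApply (fun i => (1 : Matrix R R ℂ) ⊗ₖ (K i ⊗ₖ (1 : Matrix g g ℂ))) x
      - krausApply (fun i => (1 : Matrix R R ℂ) ⊗ₖ (L i ⊗ₖ (1 : Matrix g g ℂ))) x)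
      ≤ cdist K L w :=
  traceNorm_krausApply_sub_le_cdist hK hL (Equiv.prodAssocComm R g a) (Equiv.prodAssocComm R g b)
    (fun _ => one_kronecker_kronecker_one_submatrix_prodAssocComm _)
    (fun _ => one_kronecker_kronecker_one_submatrix_prodAssocComm _) hx hx1
    (by rw [ptraceL_submatrix_prodAssocComm, hxw])

theorem traceNorm_sub_le_cdist_of_one_kronecker {R c : Type*} [Fintype R] [DecidableEq R]
    [Fintype c] [DecidableEq c] (hK : IsTracePreserving K) (hL : IsTracePreserving L)
    {x : Matrix (R × c × a) (R × c × a) ℂ} (hx : x.PosSemidef) (hx1 : x.trace = 1)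
    (hxw : ptraceL (ptraceL x) = w) :
    traceNorm (krausApply (fun i => (1 : Matrix R R ℂ) ⊗ₖ ((1 : Matrix c c ℂ) ⊗ₖ K i)) x
      - krausApply (fun i => (1 : Matrix R R ℂ) ⊗ₖ ((1 : Matrix c c ℂ) ⊗ₖ L i)) x)
      ≤ cdist K L w :=
  traceNorm_krausApply_sub_le_cdist hK hL (Equiv.prodAssoc R c a) (Equiv.prodAssoc R c b)
    (fun _ => one_kronecker_one_kronecker_submatrix_prodAssoc _)
    (fun _ => one_kronecker_one_kronecker_submatrix_prodAssoc _) hx hx1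
    (by rw [ptraceL_submatrix_prodAssoc, hxw])

end Cdist

theorem cdist_tensor_general {ι₁ ι₂ κ₁ κ₂ a b a' b' : Type*}
    [Fintype ι₁] [Fintype ι₂] [Fintype κ₁] [Fintype κ₂]
    [Fintype a] [DecidableEq a] [Fintype b] [DecidableEq b]
    [Fintype a'] [DecidableEq a'] [Fintype b'] [DecidableEq b']
    (M : ι₁ → Matrix b a ℂ) (N : ι₂ → Matrix b a ℂ)
    (K : κ₁ → Matrix b' a' ℂ) (L : κ₂ → Matrix b' a' ℂ)
    (hM : ∑ i, (M i)ᴴ * M i = 1) (hN : ∑ i, (N i)ᴴ * N i = 1)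
    (hK : ∑ i, (K i)ᴴ * K i = 1) (hL : ∑ i, (L i)ᴴ * L i = 1)
    (ω : Matrix a a ℂ) (hω1 : ω.trace = 1)
    (ρ : Matrix a' a' ℂ) (hρ1 : ρ.trace = 1) :
    cdist (fun p : ι₁ × κ₁ => M p.1 ⊗ₖ K p.2) (fun p : ι₂ × κ₂ => N p.1 ⊗ₖ L p.2) (ω ⊗ₖ ρ)
      ≤ cdist M N ω + cdist K L ρ := by
  refine Real.sSup_le ?_ (add_nonneg (cdist_nonneg M N ω) (cdist_nonneg K L ρ))
  rintro _ ⟨m, x, hx, hx1, hxω, rfl⟩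
  set Q := krausApply (fun i => (1 : Matrix (Fin m) (Fin m) ℂ) ⊗ₖ (N i ⊗ₖ (1 : Matrix a' a' ℂ))) x
  have hQ1 : Q.trace = 1 := by
    rw [((IsTracePreserving.kronecker_one a' hN).one_kronecker _).trace_krausApply, hx1]
  have hQρ : ptraceL (ptraceL Q) = ρ := by
    rw [ptraceL_krausApply_one_kronecker, IsTracePreserving.ptraceL_krausApply_kronecker_one hN,
      hxω, ptraceL_kronecker, hω1, one_smul]
  have hK' := (IsTracePreserving.one_kronecker b hK).one_kronecker (Fin m)
  rw [krausApply_one_kronecker_kronecker M K, krausApply_one_kronecker_kronecker N L]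
  refine (hK'.traceNorm_krausApply_sub_le (hx.krausApply _) (hx.krausApply _)).trans
    (add_le_add ?_ ?_)
  · exact traceNorm_sub_le_cdist_of_kronecker_one hM hN hx hx1
      (by rw [hxω, ptraceR_kronecker, hρ1, one_smul])
  · exact traceNorm_sub_le_cdist_of_one_kronecker hK hL (hx.krausApply _) hQ1 hQρ

theorem cdist_tensor {ι₁ ι₂ κ₁ κ₂ a b a' b' : Type*}
    [Fintype ι₁] [Fintype ι₂] [Fintype κ₁] [Fintype κ₂]
    [Fintype a] [DecidableEq a] [Fintype b] [DecidableEq b]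
    [Fintype a'] [DecidableEq a'] [Fintype b'] [DecidableEq b']
    (M : ι₁ → Matrix b a ℂ) (N : ι₂ → Matrix b a ℂ)
    (K : κ₁ → Matrix b' a' ℂ) (L : κ₂ → Matrix b' a' ℂ)
    (hM : ∑ i, (M i)ᴴ * M i = 1) (hN : ∑ i, (N i)ᴴ * N i = 1)
    (hK : ∑ i, (K i)ᴴ * K i = 1) (hL : ∑ i, (L i)ᴴ * L i = 1)
    (ω : Matrix a a ℂ) (hω : ω.PosSemidef) (hω1 : ω.trace = 1)
    (ρ : Matrix a' a' ℂ) (hρ : ρ.PosSemidef) (hρ1 : ρ.trace = 1) :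
    cdist (fun p : ι₁ × κ₁ => M p.1 ⊗ₖ K p.2) (fun p : ι₂ × κ₂ => N p.1 ⊗ₖ L p.2) (ω ⊗ₖ ρ)
      ≤ cdist M N ω + cdist K L ρ :=
  cdist_tensor_general M N K L hM hN hK hL ω hω1 ρ hρ1
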